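/- arXiv:2408.02979 — 2 statements merged into one kernel-verified Lean document; each statement's English description precedes it below -/
import Mathlib

section
/- Fix δ > 0 and define, for ν ≥ 1 and r ≥ 0, θ(r) = θ_{δ,ν}(r) = ∫_0^r (1+t/ν)^{−1−δ} dt. Then: (i) there exist c_0, C_0 > 0 depending only on δ such that for all ν ≥ 1 and all r > 0, c_0·min{ν,r} ≤ θ(r) ≤ min{C_0·ν, r} and θ'(r) ≤ r^{−1}θ(r); (ii) for every integer k ≥ 1 there exist c_k, C_k > 0 depending only on δ and k such that for all ν ≥ 1 and all r > 0, c_k·ν^{1−k}r^{−k−δ}θ(r)^{k+δ} ≤ (−1)^{k−1}θ^{(k)}(r) ≤ C_k·ν^{1−k}r^{−k−δ}θ(r)^{k+δ}, where θ^{(k)} denotes the k-th derivative of θ in r. -/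
open MeasureTheory Set

private lemma inner_pos {ν : ℝ} (hν : 1 ≤ ν) {t : ℝ} (ht : 0 ≤ t) : 0 < 1 + t / ν := by
  have hν0 : (0:ℝ) < ν := lt_of_lt_of_le one_pos hν
  have : 0 ≤ t / ν := div_nonneg ht hν0.le
  linarith

private lemma contAt {δ ν : ℝ} (hν : 1 ≤ ν) {t : ℝ} (ht : 0 ≤ t) :
    ContinuousAt (fun s : ℝ => (1 + s / ν) ^ (-(1:ℝ) - δ)) t := by
  have h1 : ContinuousAt (fun s : ℝ => 1 + s / ν) t := by fun_prop
  exact h1.rpow_const (Or.inl (inner_pos hν ht).ne')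

private lemma contOnIcc {δ ν : ℝ} (hν : 1 ≤ ν) (r : ℝ) :
    ContinuousOn (fun s : ℝ => (1 + s / ν) ^ (-(1:ℝ) - δ)) (Icc 0 r) :=
  fun t ht => (contAt hν ht.1).continuousWithinAt

private lemma intgOn {δ ν : ℝ} (hν : 1 ≤ ν) {r : ℝ} (hr : 0 < r) :
    IntegrableOn (fun t : ℝ => (1 + t / ν) ^ (-(1:ℝ) - δ)) (Ioo 0 r) :=
  ((contOnIcc hν r).integrableOn_Icc).mono_set Ioo_subset_Icc_self

private lemma theta_eq_interval {δ ν r : ℝ} (hr : 0 ≤ r) :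
    ∫ t in Ioo (0:ℝ) r, (1 + t / ν) ^ (-(1:ℝ) - δ)
      = ∫ t in (0:ℝ)..r, (1 + t / ν) ^ (-(1:ℝ) - δ) := by
  rw [intervalIntegral.integral_of_le hr, integral_Ioc_eq_integral_Ioo]

private lemma hasDeriv_inner {ν : ℝ} (hν : 1 ≤ ν) (t : ℝ) :
    HasDerivAt (fun s : ℝ => 1 + s / ν) (1 / ν) t := by
  simpa [one_div] using ((hasDerivAt_id t).div_const ν).const_add (1:ℝ)

private lemma theta_closed {δ ν : ℝ} (hδ : 0 < δ) (hν : 1 ≤ ν) {r : ℝ} (hr : 0 < r) :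
    ∫ t in Ioo (0:ℝ) r, (1 + t / ν) ^ (-(1:ℝ) - δ)
      = (ν / δ) * (1 - (1 + r / ν) ^ (-δ)) := by
  have hν0 : (0:ℝ) < ν := lt_of_lt_of_le one_pos hν
  rw [theta_eq_interval hr.le]
  have key : ∀ t ∈ uIcc (0:ℝ) r,
      HasDerivAt (fun s : ℝ => -(ν / δ) * (1 + s / ν) ^ (-δ))
        ((1 + t / ν) ^ (-(1:ℝ) - δ)) t := by
    intro t ht
    rw [uIcc_of_le hr.le] at ht
    have h0 : 0 < 1 + t / ν := inner_pos hν ht.1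
    have h2 := (hasDeriv_inner hν t).rpow_const (p := -δ) (Or.inl h0.ne')
    have h3 := h2.const_mul (-(ν / δ))
    refine h3.congr_deriv (Eq.symm ?_)
    rw [show -(1:ℝ) - δ = -δ - 1 by ring]
    field_simp
  have hint : IntervalIntegrable (fun t : ℝ => (1 + t / ν) ^ (-(1:ℝ) - δ)) volume 0 r := by
    apply ContinuousOn.intervalIntegrable
    rw [uIcc_of_le hr.le]; exact contOnIcc hν r
  rw [intervalIntegral.integral_eq_sub_of_hasDerivAt key hint]
  simp [Real.rpow_natCast]
  ring

private lemma const_mul_le_theta {δ ν : ℝ} (hν : 1 ≤ ν) {r c : ℝ} (hr : 0 < r)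
    (hc : ∀ t ∈ Ioo (0:ℝ) r, c ≤ (1 + t / ν) ^ (-(1:ℝ) - δ)) :
    c * r ≤ ∫ t in Ioo (0:ℝ) r, (1 + t / ν) ^ (-(1:ℝ) - δ) := by
  have h := setIntegral_mono_on (integrableOn_const (by simp [Real.volume_Ioo]))
    (intgOn hν hr) measurableSet_Ioo hc
  simpa [Real.volume_Ioo, ENNReal.toReal_ofReal hr.le, max_eq_left hr.le, mul_comm] using h

private lemma theta_le_const_mul {δ ν : ℝ} (hν : 1 ≤ ν) {r c : ℝ} (hr : 0 < r)
    (hc : ∀ t ∈ Ioo (0:ℝ) r, (1 + t / ν) ^ (-(1:ℝ) - δ) ≤ c) :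
    (∫ t in Ioo (0:ℝ) r, (1 + t / ν) ^ (-(1:ℝ) - δ)) ≤ c * r := by
  have h := setIntegral_mono_on (intgOn hν hr)
    (integrableOn_const (by simp [Real.volume_Ioo])) measurableSet_Ioo hc
  simpa [Real.volume_Ioo, ENNReal.toReal_ofReal hr.le, max_eq_left hr.le, mul_comm] using h

private lemma hasDeriv_theta {δ ν : ℝ} (hν : 1 ≤ ν) {r : ℝ} (hr : 0 < r) :
    HasDerivAt (fun s : ℝ => ∫ t in Ioo (0:ℝ) s, (1 + t / ν) ^ (-(1:ℝ) - δ))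
      ((1 + r / ν) ^ (-(1:ℝ) - δ)) r := by
  have hint : IntervalIntegrable (fun t : ℝ => (1 + t / ν) ^ (-(1:ℝ) - δ)) volume 0 r := by
    apply ContinuousOn.intervalIntegrable
    rw [uIcc_of_le hr.le]; exact contOnIcc hν r
  have hmeas : StronglyMeasurableAtFilter
      (fun t : ℝ => (1 + t / ν) ^ (-(1:ℝ) - δ)) (nhds r) volume :=
    ContinuousAt.stronglyMeasurableAtFilter isOpen_Ioi
      (fun x hx => contAt hν (le_of_lt hx)) r hr
  have h1 := intervalIntegral.integral_hasDerivAt_right hint hmeas (contAt hν hr.le)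
  apply h1.congr_of_eventuallyEq
  filter_upwards [Ioi_mem_nhds hr] with s hs
  exact theta_eq_interval (le_of_lt hs)

private def Bcoef (δ : ℝ) : ℕ → ℝ
  | 0 => 1
  | n+1 => Bcoef δ n * (1 + δ + n)

private lemma Bcoef_pos {δ : ℝ} (hδ : 0 < δ) : ∀ n, 0 < Bcoef δ n
  | 0 => one_pos
  | n+1 => mul_pos (Bcoef_pos hδ n)
      (by have : (0:ℝ) ≤ (n:ℝ) := Nat.cast_nonneg n; linarith)

private lemma iter_deriv_theta {δ ν : ℝ} (hδ : 0 < δ) (hν : 1 ≤ ν)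
    (g : ℝ → ℝ) (hg : ∀ r, g r = ∫ t in Ioo (0:ℝ) r, (1 + t / ν) ^ (-(1:ℝ) - δ)) :
    ∀ n : ℕ, ∀ r : ℝ, 0 < r →
      iteratedDeriv (n+1) g r
        = (-1:ℝ)^n * Bcoef δ n * ν ^ (-(n:ℝ)) * (1 + r / ν) ^ (-(1:ℝ) - δ - n) := by
  intro n
  induction n with
  | zero =>
    intro r hr
    rw [iteratedDeriv_one]
    have h : HasDerivAt g ((1 + r / ν) ^ (-(1:ℝ) - δ)) r := by
      apply (hasDeriv_theta (δ := δ) hν hr).congr_of_eventuallyEq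
      filter_upwards with s using hg s
    rw [h.deriv]
    push_cast
    norm_num [Bcoef]
  | succ n IH =>
    intro r hr
    rw [iteratedDeriv_succ]
    have hev : iteratedDeriv (n+1) g =ᶠ[nhds r]
        (fun s => (-1:ℝ)^n * Bcoef δ n * ν ^ (-(n:ℝ)) * (1 + s / ν) ^ (-(1:ℝ) - δ - n)) := by
      filter_upwards [Ioi_mem_nhds hr] with s hs using IH s hs
    rw [hev.deriv_eq]
    have h0 : 0 < 1 + r / ν := inner_pos hν hr.le
    have h2 := ((hasDeriv_inner hν r).rpow_const (p := -(1:ℝ) - δ - n) (Or.inl h0.ne')).const_mul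
      ((-1:ℝ)^n * Bcoef δ n * ν ^ (-(n:ℝ)))
    rw [h2.deriv]
    have hν0 : (0:ℝ) < ν := lt_of_lt_of_le one_pos hν
    have e1 : ν ^ (-((n:ℝ)+1)) = ν ^ (-(n:ℝ)) * (1/ν) := by
      rw [show -((n:ℝ)+1) = -(n:ℝ) + (-1) by ring, Real.rpow_add hν0, Real.rpow_neg_one, one_div]
    have e2 : (-(1:ℝ) - δ - (n:ℝ)) - 1 = -(1:ℝ) - δ - ((n:ℝ)+1) := by ring
    simp only [Bcoef]
    push_cast
    rw [e2, e1]
    ring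

/-- Bounds for the refined Yosida-type weight `θ_{δ,ν}(r) = ∫_0^r (1+t/ν)^{-1-δ} dt`:
(i) `c₀ min{ν,r} ≤ θ ≤ min{C₀ν, r}` and `θ' ≤ r⁻¹θ`;
(ii) for every `k ≥ 1`,
`c_k ν^{1-k} r^{-k-δ} θ^{k+δ} ≤ (-1)^{k-1} θ^{(k)} ≤ C_k ν^{1-k} r^{-k-δ} θ^{k+δ}`. -/
theorem stmt10_theta_weight_bounds (δ : ℝ) (hδ : 0 < δ)
    (θf : ℝ → ℝ → ℝ)
    (hθ : ∀ ν r, θf ν r = ∫ t in Ioo (0:ℝ) r, (1 + t / ν) ^ (-(1:ℝ) - δ)) :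
    ((∃ c₀ > (0:ℝ), ∃ C₀ > (0:ℝ), ∀ ν ≥ (1:ℝ), ∀ r > (0:ℝ),
      c₀ * min ν r ≤ θf ν r ∧ θf ν r ≤ min (C₀ * ν) r ∧
      deriv (θf ν) r ≤ r⁻¹ * θf ν r) ∧
    ∀ k : ℕ, 1 ≤ k → ∃ ck > (0:ℝ), ∃ Ck > (0:ℝ), ∀ ν ≥ (1:ℝ), ∀ r > (0:ℝ),
      ck * ν ^ ((1:ℝ) - k) * r ^ (-(k:ℝ) - δ) * θf ν r ^ ((k:ℝ) + δ)
          ≤ (-1:ℝ) ^ (k - 1) * iteratedDeriv k (θf ν) r ∧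
      (-1:ℝ) ^ (k - 1) * iteratedDeriv k (θf ν) r
          ≤ Ck * ν ^ ((1:ℝ) - k) * r ^ (-(k:ℝ) - δ) * θf ν r ^ ((k:ℝ) + δ)) := by
  set c0 : ℝ := min (2 ^ (-(1:ℝ) - δ)) ((1 - 2 ^ (-δ)) / δ) with hc0def
  have h2d : (2:ℝ) ^ (-δ) < 1 :=
    Real.rpow_lt_one_of_one_lt_of_neg one_lt_two (by linarith)
  have hc0pos : 0 < c0 := by
    apply lt_min
    · positivity
    · apply div_pos (by linarith) hδ
  -- lower bound
  have hlow : ∀ ν, 1 ≤ ν → ∀ r, 0 < r → c0 * min ν r ≤ θf ν r := by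
    intro ν hν r hr
    have hν0 : (0:ℝ) < ν := lt_of_lt_of_le one_pos hν
    rw [hθ]
    rcases le_total r ν with hrν | hνr
    · rw [min_eq_right hrν]
      have step : (2:ℝ) ^ (-(1:ℝ) - δ) * r
          ≤ ∫ t in Ioo (0:ℝ) r, (1 + t / ν) ^ (-(1:ℝ) - δ) := by
        apply const_mul_le_theta hν hr
        intro t ht
        apply Real.rpow_le_rpow_of_nonpos (inner_pos hν ht.1.le)
        · have : t / ν ≤ 1 := (div_le_one hν0).2 (le_trans ht.2.le hrν)
          linarith
        · linarith
      calc c0 * r ≤ (2:ℝ) ^ (-(1:ℝ) - δ) * r :=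
            mul_le_mul_of_nonneg_right (min_le_left _ _) hr.le
        _ ≤ _ := step
    · rw [min_eq_left hνr, theta_closed hδ hν hr]
      have hba : (1 + r / ν) ^ (-δ) ≤ 2 ^ (-δ) := by
        apply Real.rpow_le_rpow_of_nonpos two_pos
        · have : (1:ℝ) ≤ r / ν := (one_le_div hν0).2 hνr
          linarith
        · linarith
      have hnn : (0:ℝ) ≤ (1 + r / ν) ^ (-δ) := Real.rpow_nonneg (inner_pos hν hr.le).le _
      have h1 : c0 ≤ (1 - 2 ^ (-δ)) / δ := min_le_right _ _
      calc c0 * ν ≤ ((1 - 2 ^ (-δ)) / δ) * ν := mul_le_mul_of_nonneg_right h1 hν0.le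
        _ ≤ ((1 - (1 + r / ν) ^ (-δ)) / δ) * ν := by
            apply mul_le_mul_of_nonneg_right _ hν0.le
            apply div_le_div_of_nonneg_right (c := δ)
            · linarith
            · exact hδ.le
        _ = ν / δ * (1 - (1 + r / ν) ^ (-δ)) := by ring
  -- upper bound
  have hup : ∀ ν, 1 ≤ ν → ∀ r, 0 < r → θf ν r ≤ min ((1/δ) * ν) r := by
    intro ν hν r hr
    have hν0 : (0:ℝ) < ν := lt_of_lt_of_le one_pos hν
    apply le_min
    · have hnn : (0:ℝ) ≤ (1 + r / ν) ^ (-δ) := Real.rpow_nonneg (inner_pos hν hr.le).le _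
      have : ν / δ * (1 - (1 + r / ν) ^ (-δ)) ≤ ν / δ * 1 := by
        apply mul_le_mul_of_nonneg_left (by linarith) (by positivity)
      calc θf ν r = ν / δ * (1 - (1 + r / ν) ^ (-δ)) := by rw [hθ, theta_closed hδ hν hr]
        _ ≤ ν / δ * 1 := this
        _ = 1 / δ * ν := by ring
    · rw [hθ]
      have := theta_le_const_mul (δ := δ) hν hr (c := 1) ?_
      · linarith
      · intro t ht
        apply Real.rpow_le_one_of_one_le_of_nonpos
        · have : 0 ≤ t / ν := div_nonneg ht.1.le hν0.le
          linarith
        · linarith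
  -- derivative value
  have hderiv : ∀ ν, 1 ≤ ν → ∀ r, 0 < r →
      deriv (θf ν) r = (1 + r / ν) ^ (-(1:ℝ) - δ) := by
    intro ν hν r hr
    have h : HasDerivAt (θf ν) ((1 + r / ν) ^ (-(1:ℝ) - δ)) r := by
      apply (hasDeriv_theta (δ := δ) hν hr).congr_of_eventuallyEq
      filter_upwards with s using hθ ν s
    exact h.deriv
  -- derivative ≤ r⁻¹ θ
  have hderiv_le : ∀ ν, 1 ≤ ν → ∀ r, 0 < r →
      deriv (θf ν) r ≤ r⁻¹ * θf ν r := by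
    intro ν hν r hr
    have hν0 : (0:ℝ) < ν := lt_of_lt_of_le one_pos hν
    rw [hderiv ν hν r hr]
    have step : (1 + r / ν) ^ (-(1:ℝ) - δ) * r ≤ θf ν r := by
      rw [hθ]
      apply const_mul_le_theta hν hr
      intro t ht
      apply Real.rpow_le_rpow_of_nonpos (inner_pos hν ht.1.le)
      · have : t / ν ≤ r / ν := by
          apply div_le_div_of_nonneg_right ht.2.le hν0.le
        linarith
      · linarith
    calc (1 + r / ν) ^ (-(1:ℝ) - δ) = r⁻¹ * ((1 + r / ν) ^ (-(1:ℝ) - δ) * r) := by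
          field_simp
      _ ≤ r⁻¹ * θf ν r := mul_le_mul_of_nonneg_left step (inv_nonneg.2 hr.le)
  constructor
  · exact ⟨c0, hc0pos, 1/δ, one_div_pos.2 hδ, fun ν hν r hr =>
      ⟨hlow ν hν r hr, hup ν hν r hr, hderiv_le ν hν r hr⟩⟩
  -- part (ii)
  intro k hk
  obtain ⟨n, rfl⟩ : ∃ n, k = n + 1 := ⟨k - 1, (Nat.succ_pred_eq_of_pos hk).symm⟩
  set M : ℝ := 1 + 1/δ with hMdef
  set p : ℝ := ((n+1 : ℕ) : ℝ) + δ with hpdef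
  have hppos : 0 < p := by
    have : (0:ℝ) ≤ ((n+1 : ℕ) : ℝ) := Nat.cast_nonneg _
    rw [hpdef]; linarith
  have hMpos : (0:ℝ) < M := by rw [hMdef]; positivity
  have hMp : (0:ℝ) < M ^ p := Real.rpow_pos_of_pos hMpos p
  have hmp : (0:ℝ) < c0 ^ p := Real.rpow_pos_of_pos hc0pos p
  have hB := Bcoef_pos hδ n
  refine ⟨Bcoef δ n / M ^ p, by positivity, Bcoef δ n / c0 ^ p, by positivity, ?_⟩
  intro ν hν r hr
  have hν0 : (0:ℝ) < ν := lt_of_lt_of_le one_pos hν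
  have hb : 0 < 1 + r / ν := inner_pos hν hr.le
  have hθpos : 0 < θf ν r := by
    have := hlow ν hν r hr
    have : 0 < c0 * min ν r := by positivity
    linarith [hlow ν hν r hr]
  have hθr : θf ν r ≤ r := le_trans (hup ν hν r hr) (min_le_right _ _)
  have hθν : θf ν r ≤ ν / δ := by
    have := le_trans (hup ν hν r hr) (min_le_left _ _)
    calc θf ν r ≤ 1/δ * ν := this
      _ = ν / δ := by ring
  set q : ℝ := θf ν r * (1 + r / ν) / r with hqdef
  have hq0 : 0 < q := by rw [hqdef]; positivity
  have hqsplit : q = θf ν r / r + θf ν r / ν := by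
    rw [hqdef]; field_simp
  have hq2 : q ≤ M := by
    rw [hqsplit, hMdef]
    have h1 : θf ν r / r ≤ 1 := (div_le_one hr).2 hθr
    have h2 : θf ν r / ν ≤ 1 / δ := by
      rw [div_le_div_iff₀ hν0 hδ]
      have := (le_div_iff₀ hδ).1 hθν
      linarith
    linarith
  have hq1 : c0 ≤ q := by
    rw [hqsplit]
    rcases le_total r ν with hrν | hνr
    · have h1 : c0 ≤ θf ν r / r := by
        rw [le_div_iff₀ hr]
        have := hlow ν hν r hr
        rw [min_eq_right hrν] at this
        linarith
      have h2 : 0 ≤ θf ν r / ν := by positivity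
      linarith
    · have h1 : c0 ≤ θf ν r / ν := by
        rw [le_div_iff₀ hν0]
        have := hlow ν hν r hr
        rw [min_eq_left hνr] at this
        linarith
      have h2 : 0 ≤ θf ν r / r := by positivity
      linarith
  -- formula for iterated derivative
  have hform := iter_deriv_theta hδ hν (θf ν) (hθ ν) n r hr
  have hsq : (-1:ℝ)^n * (-1:ℝ)^n = 1 := by rw [← mul_pow]; norm_num
  -- exponent rewrites
  have eν : ν ^ ((1:ℝ) - ((n+1:ℕ):ℝ)) = ν ^ (-(n:ℝ)) := by
    congr 1; push_cast; ring
  have eb : (1 + r / ν) ^ (-(1:ℝ) - δ - (n:ℝ)) = (1 + r / ν) ^ (-p) := by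
    congr 1; rw [hpdef]; push_cast; ring
  have er : r ^ (-((n+1:ℕ):ℝ) - δ) = r ^ (-p) := by
    congr 1; rw [hpdef]; push_cast; ring
  have eθ : θf ν r ^ (((n+1:ℕ):ℝ) + δ) = θf ν r ^ p := by rw [hpdef]
  have key : r ^ (-p) * θf ν r ^ p = q ^ p * (1 + r / ν) ^ (-p) := by
    have hqp : q ^ p = θf ν r ^ p * (1 + r / ν) ^ p / r ^ p := by
      rw [hqdef, Real.div_rpow (by positivity) hr.le, Real.mul_rpow hθpos.le hb.le]
    have hbp : (0:ℝ) < (1 + r / ν) ^ p := Real.rpow_pos_of_pos hb p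
    have hrp : (0:ℝ) < r ^ p := Real.rpow_pos_of_pos hr p
    rw [Real.rpow_neg hr.le, Real.rpow_neg hb.le, hqp]
    field_simp
  have hqple : q ^ p ≤ M ^ p := Real.rpow_le_rpow hq0.le hq2 hppos.le
  have hqpge : c0 ^ p ≤ q ^ p := Real.rpow_le_rpow hc0pos.le hq1 hppos.le
  have hckq : Bcoef δ n / M ^ p * q ^ p ≤ Bcoef δ n := by
    have h := mul_le_mul_of_nonneg_left hqple (le_of_lt (by positivity :
      (0:ℝ) < Bcoef δ n / M ^ p))
    rwa [div_mul_cancel₀ _ hMp.ne'] at h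
  have hCkq : Bcoef δ n ≤ Bcoef δ n / c0 ^ p * q ^ p := by
    have h := mul_le_mul_of_nonneg_left hqpge (le_of_lt (by positivity :
      (0:ℝ) < Bcoef δ n / c0 ^ p))
    rwa [div_mul_cancel₀ _ hmp.ne'] at h
  have hsign : ((-1:ℝ)) ^ (n + 1 - 1) = ((-1:ℝ)) ^ n := by norm_num
  rw [hsign, hform, eν, er, eθ, eb]
  have hposfac : (0:ℝ) ≤ ν ^ (-(n:ℝ)) * (1 + r / ν) ^ (-p) := by positivity
  constructor
  · calc Bcoef δ n / M ^ p * ν ^ (-(n:ℝ)) * r ^ (-p) * θf ν r ^ p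
        = (Bcoef δ n / M ^ p * q ^ p) * (ν ^ (-(n:ℝ)) * (1 + r / ν) ^ (-p)) := by
          rw [mul_assoc (Bcoef δ n / M ^ p * ν ^ (-(n:ℝ))), key]; ring
      _ ≤ Bcoef δ n * (ν ^ (-(n:ℝ)) * (1 + r / ν) ^ (-p)) :=
          mul_le_mul_of_nonneg_right hckq hposfac
      _ = (-1:ℝ)^n * ((-1:ℝ)^n * Bcoef δ n * ν ^ (-(n:ℝ)) * (1 + r / ν) ^ (-p)) := by
          linear_combination (-(Bcoef δ n * (ν ^ (-(n:ℝ)) * (1 + r / ν) ^ (-p)))) * hsq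
  · calc (-1:ℝ)^n * ((-1:ℝ)^n * Bcoef δ n * ν ^ (-(n:ℝ)) * (1 + r / ν) ^ (-p))
        = Bcoef δ n * (ν ^ (-(n:ℝ)) * (1 + r / ν) ^ (-p)) := by
          linear_combination (Bcoef δ n * (ν ^ (-(n:ℝ)) * (1 + r / ν) ^ (-p))) * hsq
      _ ≤ (Bcoef δ n / c0 ^ p * q ^ p) * (ν ^ (-(n:ℝ)) * (1 + r / ν) ^ (-p)) :=
          mul_le_mul_of_nonneg_right hCkq hposfac
      _ = Bcoef δ n / c0 ^ p * ν ^ (-(n:ℝ)) * r ^ (-p) * θf ν r ^ p := by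
          rw [mul_assoc (Bcoef δ n / c0 ^ p * ν ^ (-(n:ℝ))), key]; ring
end

section
/- Let d ≥ 2, let V: ℝ^d → ℝ be continuous, let R ≥ 1, λ ∈ ℝ, and suppose S is a real-valued C² function on an open set containing {x ∈ ℝ^d : |x| > 2R} satisfying (1/2)|∇S(x)|² + V(x) = λ for all |x| > 2R. Fix a sign ± and define, for complex-valued C² functions u, the operators γ_ju = −i∂_ju ∓ (∂_jS)u (j = 1,…,d) and γ_∥u = Σ_j (∂_jS)(γ_ju) − (i/2)(ΔS)u. Then for every Γ ∈ ℝ, with z = λ ± iΓ, every complex-valued C² function u on {|x| > 2R}, and every x with |x| > 2R: −(1/2)Δu(x) + V(x)u(x) − z·u(x) = (1/2)Σ_j γ_j(γ_ju)(x) ± γ_∥u(x) ∓ iΓ·u(x). -/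
open Set

noncomputable section

abbrev Euc (d : ℕ) := EuclideanSpace ℝ (Fin d)

/-- The `j`-th standard basis vector. -/
def esingle {d : ℕ} (j : Fin d) : Euc d := EuclideanSpace.single j 1

/-- The partial derivative `∂_j u` of a complex-valued function. -/
def pdC {d : ℕ} (j : Fin d) (u : Euc d → ℂ) (x : Euc d) : ℂ :=
  fderiv ℝ u x (esingle j)

/-- The partial derivative `∂_j S` of a real-valued function. -/
def pdR {d : ℕ} (j : Fin d) (S : Euc d → ℝ) (x : Euc d) : ℝ :=
  fderiv ℝ S x (esingle j)

/-- The Laplacian `Δu = ∑_j ∂_j∂_j u` of a complex-valued function. -/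
def lapC {d : ℕ} (u : Euc d → ℂ) (x : Euc d) : ℂ :=
  ∑ j, fderiv ℝ (fun y => pdC j u y) x (esingle j)

/-- The Laplacian `ΔS = ∑_j ∂_j∂_j S` of a real-valued function. -/
def lapR {d : ℕ} (S : Euc d → ℝ) (x : Euc d) : ℝ :=
  ∑ j, fderiv ℝ (fun y => pdR j S y) x (esingle j)

/-- The gamma (radiation) operator `γ_j u = -i∂_j u ∓ (∂_jS)u`; the sign `∓` is `- sgn`. -/
def gamOp {d : ℕ} (sgn : ℝ) (S : Euc d → ℝ) (j : Fin d) (u : Euc d → ℂ) (x : Euc d) : ℂ :=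
  -Complex.I * pdC j u x - (sgn : ℂ) * (pdR j S x : ℂ) * u x

/-- The radial gamma operator `γ_∥ u = ∑_j (∂_jS)(γ_j u) - (i/2)(ΔS)u`. -/
def gamPar {d : ℕ} (sgn : ℝ) (S : Euc d → ℝ) (u : Euc d → ℂ) (x : Euc d) : ℂ :=
  (∑ j, (pdR j S x : ℂ) * gamOp sgn S j u x) - Complex.I / 2 * (lapR S x : ℂ) * u x

/-- **Increment/decrement identity**: if `S` solves the eikonal equation
`(1/2)|∇S|² + V = λ` outside the ball of radius `2R`, then there (with `z = λ ± iΓ`)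
`(H - z)u = (1/2)∑_j γ_j(γ_j u) ± γ_∥ u ∓ iΓ u`. -/


theorem stmt11_increment_decrement_identity
    (d : ℕ) (hd : 2 ≤ d) (V : Euc d → ℝ) (hV : Continuous V)
    (R : ℝ) (hR : 1 ≤ R) (lam : ℝ)
    (S : Euc d → ℝ) (hS : ContDiffOn ℝ 2 S {x : Euc d | 2 * R < ‖x‖})
    (heik : ∀ x : Euc d, 2 * R < ‖x‖ →
      (1/2) * (∑ j, pdR j S x ^ 2) + V x = lam)
    (sgn : ℝ) (hsgn : sgn = 1 ∨ sgn = -1)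
    (Gam : ℝ) (u : Euc d → ℂ) (hu : ContDiffOn ℝ 2 u {x : Euc d | 2 * R < ‖x‖})
    (x : Euc d) (hx : 2 * R < ‖x‖) :
    -(1/2 : ℂ) * lapC u x + (V x : ℂ) * u x
        - ((lam : ℂ) + (sgn : ℂ) * (Gam : ℂ) * Complex.I) * u x
      = (1/2 : ℂ) * (∑ j, gamOp sgn S j (fun y => gamOp sgn S j u y) x)
        + (sgn : ℂ) * gamPar sgn S u x
        - (sgn : ℂ) * Complex.I * (Gam : ℂ) * u x := by
  have hU : IsOpen {y : Euc d | 2 * R < ‖y‖} :=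
    isOpen_lt continuous_const continuous_norm
  have hu2 : ContDiffAt ℝ 2 u x := hu.contDiffAt (hU.mem_nhds hx)
  have hS2 : ContDiffAt ℝ 2 S x := hS.contDiffAt (hU.mem_nhds hx)
  have hud : DifferentiableAt ℝ u x := hu2.differentiableAt (by norm_num)
  have hfu : ContDiffAt ℝ 1 (fderiv ℝ u) x := hu2.fderiv_right (le_refl 2)
  have hfS : ContDiffAt ℝ 1 (fderiv ℝ S) x := hS2.fderiv_right (le_refl 2)
  have hpu : ∀ j : Fin d, DifferentiableAt ℝ (fun y => pdC j u y) x := fun j =>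
    (hfu.differentiableAt one_ne_zero).clm_apply (differentiableAt_const _)
  have hpS : ∀ j : Fin d, DifferentiableAt ℝ (fun y => pdR j S y) x := fun j =>
    (hfS.differentiableAt one_ne_zero).clm_apply (differentiableAt_const _)
  have hsq : (sgn : ℂ)^2 = 1 := by rcases hsgn with h | h <;> subst h <;> norm_num
  set A : Fin d → ℂ := fun j => fderiv ℝ (fun y => pdC j u y) x (esingle j) with hA
  set B : Fin d → ℝ := fun j => fderiv ℝ (fun y => pdR j S y) x (esingle j) with hB
  -- derivative of the complexified ∂_j S
  have hcS : ∀ j : Fin d, DifferentiableAt ℝ (fun y => ((pdR j S y : ℝ) : ℂ)) x := fun j =>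
    Complex.ofRealCLM.differentiableAt.comp x (hpS j)
  have hcSd : ∀ j : Fin d,
      fderiv ℝ (fun y => ((pdR j S y : ℝ) : ℂ)) x (esingle j) = ((B j : ℝ) : ℂ) := by
    intro j
    have : fderiv ℝ (fun y => ((pdR j S y : ℝ) : ℂ)) x
        = Complex.ofRealCLM.comp (fderiv ℝ (fun y => pdR j S y) x) := by
      exact (Complex.ofRealCLM.hasFDerivAt.comp x (hpS j).hasFDerivAt).fderiv
    rw [this]; rfl
  -- derivative of γ_j u in direction j
  have key : ∀ j : Fin d, pdC j (fun y => gamOp sgn S j u y) x =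
      -Complex.I * A j
      - (sgn : ℂ) * (((B j : ℝ) : ℂ) * u x + (pdR j S x : ℂ) * pdC j u x) := by
    intro j
    have hfun : (fun y => gamOp sgn S j u y)
        = fun y => -Complex.I * pdC j u y
            - (sgn : ℂ) * (((pdR j S y : ℝ) : ℂ) * u y) := by
      funext y; unfold gamOp; ring
    have h2 : DifferentiableAt ℝ (fun y => ((pdR j S y : ℝ) : ℂ) * u y) x :=
      (hcS j).mul hud
    show fderiv ℝ (fun y => gamOp sgn S j u y) x (esingle j) = _
    rw [hfun, fderiv_fun_sub ((hpu j).const_mul _) (h2.const_mul _),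
      fderiv_const_mul (hpu j), fderiv_const_mul h2, fderiv_fun_mul (hcS j) hud]
    simp only [ContinuousLinearMap.sub_apply, ContinuousLinearMap.smul_apply,
      ContinuousLinearMap.add_apply, smul_eq_mul, hcSd j]
    show -Complex.I * A j - (sgn : ℂ) * (((pdR j S x : ℝ) : ℂ) * pdC j u x
      + u x * ((B j : ℝ) : ℂ)) = _
    ring
  have keyfull : ∀ j : Fin d, gamOp sgn S j (fun y => gamOp sgn S j u y) x
      = -(A j) + (Complex.I * (sgn : ℂ) * u x) * ((B j : ℝ) : ℂ)
        + (2 * Complex.I * (sgn : ℂ)) * ((pdR j S x : ℂ) * pdC j u x)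
        + u x * ((pdR j S x : ℂ))^2 := by
    intro j
    show -Complex.I * pdC j (fun y => gamOp sgn S j u y) x
        - (sgn : ℂ) * (pdR j S x : ℂ) * gamOp sgn S j u x = _
    rw [key j]
    unfold gamOp
    linear_combination ((pdR j S x : ℂ))^2 * u x * hsq + A j * Complex.I_sq
  have hsum1 : (∑ j, gamOp sgn S j (fun y => gamOp sgn S j u y) x)
      = -(∑ j, A j) + (Complex.I * (sgn : ℂ) * u x) * (∑ j, ((B j : ℝ) : ℂ))
        + (2 * Complex.I * (sgn : ℂ)) * (∑ j, (pdR j S x : ℂ) * pdC j u x)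
        + u x * (∑ j, ((pdR j S x : ℂ))^2) := by
    rw [Finset.sum_congr rfl fun j _ => keyfull j]
    simp [Finset.sum_add_distrib, Finset.mul_sum, Finset.sum_neg_distrib]
  have hsum2 : (∑ j, (pdR j S x : ℂ) * gamOp sgn S j u x)
      = (-Complex.I) * (∑ j, (pdR j S x : ℂ) * pdC j u x)
        + (-(sgn : ℂ) * u x) * (∑ j, ((pdR j S x : ℂ))^2) := by
    rw [Finset.sum_congr rfl fun j _ =>
      (show (pdR j S x : ℂ) * gamOp sgn S j u x
        = (-Complex.I) * ((pdR j S x : ℂ) * pdC j u x)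
          + (-(sgn : ℂ) * u x) * ((pdR j S x : ℂ))^2 by unfold gamOp; ring)]
    simp [Finset.sum_add_distrib, Finset.mul_sum]
  have hlapR : ((lapR S x : ℝ) : ℂ) = ∑ j, ((B j : ℝ) : ℂ) := by
    unfold lapR; push_cast; rfl
  have hlapC : lapC u x = ∑ j, A j := rfl
  have hE : (∑ j, ((pdR j S x : ℂ))^2) = 2 * ((lam : ℂ) - (V x : ℂ)) := by
    have h := heik x hx
    have h2 : (∑ j, (pdR j S x)^2 : ℝ) = 2 * (lam - V x) := by linarith
    calc (∑ j, ((pdR j S x : ℂ))^2) = (((∑ j, (pdR j S x)^2 : ℝ)) : ℂ) := by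
          push_cast; rfl
      _ = 2 * ((lam : ℂ) - (V x : ℂ)) := by rw [h2]; push_cast; ring
  unfold gamPar
  rw [hsum1, hsum2, hlapR, hlapC]
  linear_combination (u x / 2) * hE + u x * (∑ j, ((pdR j S x : ℂ))^2) * hsq

end
end
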